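/- Let A_0, A_1, A_2 be real symmetric n×n matrices with μ_0, μ_1, μ_2 ≥ 0, μ_0 + μ_1 + μ_2 = 1, μ_0 > 0, and μ_0 A_0 + μ_1 A_1 + μ_2 A_2 ⪰ 0. Then Property IR fails for A_0, A_1, A_2, i.e., there do not exist μ̆_1, μ̆_2, μ̆_3 > 0 and x̆_1, x̆_2 ∈ ℝ^n with Z̆ := A_0 + μ̆_1 A_1 + μ̆_2 A_2 + μ̆_3 I ⪰ 0, span{x̆_1, x̆_2} = Null(Z̆), x̆_1^T A_1 x̆_1 = x̆_2^T A_1 x̆_2 = 0 ≠ x̆_1^T A_1 x̆_2, and x̆_1^T A_2 x̆_1 < 0 < x̆_2^T A_2 x̆_2. -/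

import Mathlib

/-!
Test the two matrix pencils against `X = q₂ x₁x₁ᵀ - q₁ x₂x₂ᵀ`, where `qᵢ = xᵢᵀ A₂ xᵢ`; it is positive
semidefinite because `q₁ < 0 < q₂`. The choice of weights makes `tr (A₂ X) = 0`, and `tr (A₁ X) = 0`
since `A₁` is isotropic on `x₁` and `x₂`. As `x₁, x₂ ∈ Null(Z̆)`, `tr (Z̆ X) = 0` forces
`tr (A₀ X) = -ν₃ tr X < 0`, whereas positive semidefiniteness of `μ₀ A₀ + μ₁ A₁ + μ₂ A₂` gives
`0 ≤ μ₀ tr (A₀ X)`.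
-/

open Matrix

lemma dotProduct_self_pos_of_ne_zero {ι R : Type*} [Fintype ι] [Ring R] [LinearOrder R]
    [IsStrictOrderedRing R] {x : ι → R} (hx : x ≠ 0) : 0 < x ⬝ᵥ x :=
  (Finset.sum_nonneg fun i _ ↦ mul_self_nonneg (x i)).lt_of_ne' (dotProduct_self_eq_zero.not.2 hx)

section Trace

variable {ι R : Type*} [Fintype ι] [CommRing R]

lemma trace_mul_vecMulVec_self (M : Matrix ι ι R) (x : ι → R) :
    trace (M * vecMulVec x x) = x ⬝ᵥ M *ᵥ x := by
  rw [mul_vecMulVec, trace_vecMulVec, dotProduct_comm]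

lemma trace_mul_add_smul_vecMulVec_self (M : Matrix ι ι R) (α β : R) (x₁ x₂ : ι → R) :
    trace (M * (α • vecMulVec x₁ x₁ + β • vecMulVec x₂ x₂)) =
      α * (x₁ ⬝ᵥ M *ᵥ x₁) + β * (x₂ ⬝ᵥ M *ᵥ x₂) := by
  simp only [mul_add, mul_smul_comm, trace_add, trace_smul, trace_mul_vecMulVec_self, smul_eq_mul]

variable {A₀ A₁ A₂ X : Matrix ι ι R}

lemma trace_mul_nonneg_of_trace_combination_mul_nonneg [LinearOrder R] [IsStrictOrderedRing R]
    {μ₀ μ₁ μ₂ : R} (hμ₀ : 0 < μ₀)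
    (hM : 0 ≤ trace ((μ₀ • A₀ + μ₁ • A₁ + μ₂ • A₂) * X))
    (h₁ : trace (A₁ * X) = 0) (h₂ : trace (A₂ * X) = 0) :
    0 ≤ trace (A₀ * X) := by
  simp only [add_mul, smul_mul_assoc, trace_add, trace_smul, h₁, h₂, smul_eq_mul, mul_zero,
    add_zero] at hM
  exact nonneg_of_mul_nonneg_right hM hμ₀

lemma trace_mul_neg_of_trace_pencil_mul_eq_zero [DecidableEq ι] [LinearOrder R]
    [IsStrictOrderedRing R]
    {ν₁ ν₂ ν₃ : R} (hν₃ : 0 < ν₃)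
    (hZ : trace ((A₀ + ν₁ • A₁ + ν₂ • A₂ + ν₃ • (1 : Matrix ι ι R)) * X) = 0)
    (h₁ : trace (A₁ * X) = 0) (h₂ : trace (A₂ * X) = 0) (hX : 0 < trace X) :
    trace (A₀ * X) < 0 := by
  simp only [add_mul, smul_mul_assoc, one_mul, trace_add, trace_smul, h₁, h₂, smul_eq_mul,
    mul_zero, add_zero] at hZ
  nlinarith [mul_pos hν₃ hX]

end Trace

theorem stmt_18_general (n : ℕ) (A₀ A₁ A₂ : Matrix (Fin n) (Fin n) ℝ)
    (μ₀ μ₁ μ₂ : ℝ) (hμ₀ : 0 < μ₀)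
    (hpsd : (μ₀ • A₀ + μ₁ • A₁ + μ₂ • A₂).PosSemidef) :
    ¬ ∃ (ν₁ ν₂ ν₃ : ℝ) (x₁ x₂ : Fin n → ℝ),
      0 < ν₁ ∧ 0 < ν₂ ∧ 0 < ν₃ ∧
      (A₀ + ν₁ • A₁ + ν₂ • A₂ + ν₃ • (1 : Matrix (Fin n) (Fin n) ℝ)).PosSemidef ∧
      Submodule.span ℝ {x₁, x₂} =
        LinearMap.ker (A₀ + ν₁ • A₁ + ν₂ • A₂ + ν₃ • (1 : Matrix (Fin n) (Fin n) ℝ)).mulVecLin ∧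
      x₁ ⬝ᵥ A₁.mulVec x₁ = 0 ∧ x₂ ⬝ᵥ A₁.mulVec x₂ = 0 ∧
      x₁ ⬝ᵥ A₁.mulVec x₂ ≠ 0 ∧
      x₁ ⬝ᵥ A₂.mulVec x₁ < 0 ∧ 0 < x₂ ⬝ᵥ A₂.mulVec x₂ := by
  rintro ⟨ν₁, ν₂, ν₃, x₁, x₂, -, -, hν₃, -, hker, h₁₁, h₂₂, -, hq₁, hq₂⟩
  have hZx₁ := (hker ▸ Submodule.subset_span (by simp) : x₁ ∈ LinearMap.ker _)
  have hZx₂ := (hker ▸ Submodule.subset_span (by simp) : x₂ ∈ LinearMap.ker _)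
  rw [LinearMap.mem_ker, mulVecLin_apply] at hZx₁ hZx₂
  have hx₁ : x₁ ≠ 0 := by rintro rfl; simp at hq₁
  have hx₂ : x₂ ≠ 0 := by rintro rfl; simp at hq₂
  set X := (x₂ ⬝ᵥ A₂ *ᵥ x₂) • vecMulVec x₁ x₁ + (-(x₁ ⬝ᵥ A₂ *ᵥ x₁)) • vecMulVec x₂ x₂
  have htrace (M : Matrix (Fin n) (Fin n) ℝ) : trace (M * X) =
      (x₂ ⬝ᵥ A₂ *ᵥ x₂) * (x₁ ⬝ᵥ M *ᵥ x₁) + (-(x₁ ⬝ᵥ A₂ *ᵥ x₁)) * (x₂ ⬝ᵥ M *ᵥ x₂) :=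
    trace_mul_add_smul_vecMulVec_self M _ _ x₁ x₂
  have h₁ : trace (A₁ * X) = 0 := by rw [htrace, h₁₁, h₂₂]; ring
  have h₂ : trace (A₂ * X) = 0 := by rw [htrace]; ring
  have hM₁ := hpsd.dotProduct_mulVec_nonneg x₁
  have hM₂ := hpsd.dotProduct_mulVec_nonneg x₂
  rw [star_trivial] at hM₁ hM₂
  have hnonneg : 0 ≤ trace (A₀ * X) :=
    trace_mul_nonneg_of_trace_combination_mul_nonneg hμ₀
      (htrace _ ▸ add_nonneg (mul_nonneg hq₂.le hM₁) (mul_nonneg (neg_nonneg.2 hq₁.le) hM₂)) h₁ h₂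
  have hX : 0 < trace X := by
    rw [← one_mul X, htrace, one_mulVec, one_mulVec]
    exact add_pos (mul_pos hq₂ (dotProduct_self_pos_of_ne_zero hx₁))
      (mul_pos (neg_pos.2 hq₁) (dotProduct_self_pos_of_ne_zero hx₂))
  have hneg : trace (A₀ * X) < 0 :=
    trace_mul_neg_of_trace_pencil_mul_eq_zero (ν₁ := ν₁) (ν₂ := ν₂) hν₃
      (by simp [htrace, hZx₁, hZx₂]) h₁ h₂ hX
  exact hneg.not_ge hnonneg

theorem stmt_18 (n : ℕ) (A₀ A₁ A₂ : Matrix (Fin n) (Fin n) ℝ)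
    (hA₀ : A₀.IsSymm) (hA₁ : A₁.IsSymm) (hA₂ : A₂.IsSymm)
    (μ₀ μ₁ μ₂ : ℝ) (hμ₀ : 0 < μ₀) (hμ₁ : 0 ≤ μ₁) (hμ₂ : 0 ≤ μ₂)
    (hsum : μ₀ + μ₁ + μ₂ = 1)
    (hpsd : (μ₀ • A₀ + μ₁ • A₁ + μ₂ • A₂).PosSemidef) :
    ¬ ∃ (ν₁ ν₂ ν₃ : ℝ) (x₁ x₂ : Fin n → ℝ),
      0 < ν₁ ∧ 0 < ν₂ ∧ 0 < ν₃ ∧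
      (A₀ + ν₁ • A₁ + ν₂ • A₂ + ν₃ • (1 : Matrix (Fin n) (Fin n) ℝ)).PosSemidef ∧
      Submodule.span ℝ {x₁, x₂} =
        LinearMap.ker (A₀ + ν₁ • A₁ + ν₂ • A₂ + ν₃ • (1 : Matrix (Fin n) (Fin n) ℝ)).mulVecLin ∧
      x₁ ⬝ᵥ A₁.mulVec x₁ = 0 ∧ x₂ ⬝ᵥ A₁.mulVec x₂ = 0 ∧
      x₁ ⬝ᵥ A₁.mulVec x₂ ≠ 0 ∧
      x₁ ⬝ᵥ A₂.mulVec x₁ < 0 ∧ 0 < x₂ ⬝ᵥ A₂.mulVec x₂ :=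
  stmt_18_general n A₀ A₁ A₂ μ₀ μ₁ μ₂ hμ₀ hpsd
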